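/- arXiv:0908.3109 — 5 statements merged into one kernel-verified Lean document; each statement's English description precedes it below -/
import Mathlib

section
/- Let G be a finite simple graph and G^(0) its symmetric tube. Then every dart-vertex (v,u) of G^(0) has degree deg_G(v) in G^(0), and every pair-vertex (v,{a,b}) of G^(0) has degree 2 in G^(0). -/
/-!
The neighbours of a dart `(v,u)` are the reverse dart `(u,v)` and the pair-vertices `(v,{u,w})`
with `w ≠ u` a neighbour of `v`; sending `(u,v) ↦ u` and `(v,{u,w}) ↦ w` is a bijection onto
the neighbours of `v`. The neighbours of a pair-vertex `(v,{a,b})` are the two darts `(v,a)` and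
`(v,b)`.
-/

open SimpleGraph

variable {V : Type*}

/-- A pair-vertex of the symmetric tube: a vertex `v` together with an unordered pair
of two distinct neighbors of `v`. -/
abbrev TubePair (G : SimpleGraph V) : Type _ :=
  {p : V × Sym2 V // ¬ p.2.IsDiag ∧ ∀ x ∈ p.2, G.Adj p.1 x}

/-- The vertex set of the symmetric tube: darts of `G` together with pair-vertices. -/
abbrev TubeVertex (G : SimpleGraph V) : Type _ := G.Dart ⊕ TubePair G

/-- The symmetric tube `G⁽⁰⁾` of a simple graph `G`: an X-edge joins the darts `(v,u)` and
`(u,v)` for each edge `{v,u}` of `G`, and Y-edges join the pair-vertex `(v,{a,b})` to each of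
the darts `(v,a)` and `(v,b)`. -/
def tube (G : SimpleGraph V) : SimpleGraph (TubeVertex G) where
  Adj x y :=
    match x, y with
    | Sum.inl d, Sum.inl d' => d' = d.symm
    | Sum.inl d, Sum.inr p => p.1.1 = d.fst ∧ d.snd ∈ p.1.2
    | Sum.inr p, Sum.inl d => p.1.1 = d.fst ∧ d.snd ∈ p.1.2
    | Sum.inr _, Sum.inr _ => False
  symm := by
    constructor
    rintro (d | p) (d' | p') h
    · simp only at h ⊢
      rw [h, SimpleGraph.Dart.symm_symm]
    · exact h
    · exact h
    · exact h
  loopless := by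
    constructor
    rintro (d | p) h
    · exact SimpleGraph.Dart.symm_ne d h.symm
    · exact h

theorem Sym2.natCard_coe_of_not_isDiag {α : Type*} {z : Sym2 α} (h : ¬ z.IsDiag) :
    Nat.card (z : Set α) = 2 := by
  induction z using Sym2.ind with
  | _ a b => rw [Sym2.coe_mk, Nat.card_coe_set_eq, Set.ncard_pair (Sym2.mk_isDiag_iff.not.1 h)]

variable {G : SimpleGraph V}

noncomputable def tubePairsThroughEquiv (d : G.Dart) :
    {p : TubePair G // p.1.1 = d.fst ∧ d.snd ∈ p.1.2} ≃
      {w : G.neighborSet d.fst // w ≠ ⟨d.snd, d.adj⟩} where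
  toFun p := ⟨⟨Sym2.Mem.other p.2.2,
      (congrArg (G.Adj · _) p.2.1).mp (p.1.2.2 _ (Sym2.other_mem p.2.2))⟩,
    fun h => Sym2.other_ne p.1.2.1 p.2.2 (congrArg Subtype.val h)⟩
  invFun w := ⟨⟨(d.fst, s(d.snd, w.1)),
    Sym2.mk_isDiag_iff.not.2 fun h => w.2 (Subtype.ext h.symm),
    Sym2.ball.2 ⟨d.adj, w.1.2⟩⟩, rfl, Sym2.mem_mk_left _ _⟩
  left_inv p := Subtype.ext <| Subtype.ext <| Prod.ext p.2.1.symm (Sym2.other_spec p.2.2)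
  right_inv _ := Subtype.ext <| Subtype.ext <| Sym2.congr_right.1 (Sym2.other_spec _)

noncomputable def tubeNeighborSetInlEquiv (d : G.Dart) :
    (tube G).neighborSet (.inl d) ≃ G.neighborSet d.fst :=
  calc (tube G).neighborSet (.inl d)
      ≃ {d' // d' = d.symm} ⊕ {p : TubePair G // p.1.1 = d.fst ∧ d.snd ∈ p.1.2} :=
        Equiv.subtypeSum
    _ ≃ Option {w : G.neighborSet d.fst // w ≠ ⟨d.snd, d.adj⟩} :=
        (Equiv.sumCongr (Equiv.equivPUnit.{_, 1} _) (tubePairsThroughEquiv d)).trans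
          ((Equiv.sumComm _ _).trans (Equiv.optionEquivSumPUnit _).symm)
    _ ≃ G.neighborSet d.fst := by classical exact Equiv.optionSubtypeNe _

def tubeNeighborSetInrEquiv (p : TubePair G) :
    (tube G).neighborSet (.inr p) ≃ (p.1.2 : Set V) :=
  have : IsEmpty {q : TubePair G // .inr q ∈ (tube G).neighborSet (.inr p)} := ⟨fun q => q.2⟩
  Equiv.subtypeSum.trans <| (Equiv.sumEmpty _ _).trans
    { toFun d := ⟨d.1.snd, d.2.2⟩
      invFun x := ⟨⟨(p.1.1, x), p.2.2 x x.2⟩, rfl, x.2⟩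
      left_inv d := Subtype.ext <| Dart.ext _ _ <| Prod.ext d.2.1 rfl
      right_inv _ := rfl }

theorem stmt_3_general {V : Type*} [Fintype V] (G : SimpleGraph V)
    [DecidableRel G.Adj] :
    (∀ d : G.Dart,
        Nat.card ((tube G).neighborSet (Sum.inl d : TubeVertex G)) = G.degree d.fst) ∧
    (∀ p : TubePair G,
        Nat.card ((tube G).neighborSet (Sum.inr p : TubeVertex G)) = 2) := by
  refine ⟨fun d => ?_, fun p => ?_⟩
  · rw [Nat.card_congr (tubeNeighborSetInlEquiv d), Nat.card_eq_fintype_card,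
      card_neighborSet_eq_degree]
  · rw [Nat.card_congr (tubeNeighborSetInrEquiv p), Sym2.natCard_coe_of_not_isDiag p.2.1]

/-- In the symmetric tube `G⁽⁰⁾`, every dart-vertex `(v,u)` has degree `deg_G v`,
and every pair-vertex `(v,{a,b})` has degree `2`. -/
theorem stmt_3 {V : Type*} [Fintype V] [DecidableEq V] (G : SimpleGraph V)
    [DecidableRel G.Adj] :
    (∀ d : G.Dart,
        Nat.card ((tube G).neighborSet (Sum.inl d : TubeVertex G)) = G.degree d.fst) ∧
    (∀ p : TubePair G,
        Nat.card ((tube G).neighborSet (Sum.inr p : TubeVertex G)) = 2) :=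
  stmt_3_general G
end

section
/- Let G be a finite connected simple graph with at least one edge. Then its symmetric tube G^(0) is a connected graph. -/
open SimpleGraph

variable {V : Type*}

/-!
Any two darts leaving the same vertex `v` are joined in `G⁽⁰⁾` through the pair-vertex
`(v, {a, b})` of their heads, and the X-edge turns a dart `(u, x)` into `(x, u)`. Following a
walk of `G` edge by edge therefore connects all darts of a connected graph, and every
pair-vertex hangs on a dart by a Y-edge.
-/

namespace tube

variable {G : SimpleGraph V}

lemma adj_inl_symm (d : G.Dart) : (tube G).Adj (Sum.inl d) (Sum.inl d.symm) := rfl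

lemma reachable_inl_of_fst_eq {d d' : G.Dart} (h : d.fst = d'.fst) :
    (tube G).Reachable (Sum.inl d) (Sum.inl d') := by
  by_cases hsnd : d.snd = d'.snd
  · rw [Dart.ext _ _ (Prod.ext h hsnd)]
  let p : TubePair G := ⟨(d.fst, s(d.snd, d'.snd)), hsnd, by
    rintro x hx
    obtain rfl | rfl := Sym2.mem_iff.1 hx
    · exact d.adj
    · exact h ▸ d'.adj⟩
  have hd : (tube G).Adj (Sum.inl d) (Sum.inr p) := ⟨rfl, Sym2.mem_mk_left _ _⟩
  have hd' : (tube G).Adj (Sum.inr p) (Sum.inl d') := ⟨h, Sym2.mem_mk_right _ _⟩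
  exact hd.reachable.trans hd'.reachable

lemma reachable_inl_of_walk {u v : V} (w : G.Walk u v) {d d' : G.Dart} (hu : d.fst = u)
    (hv : d'.fst = v) : (tube G).Reachable (Sum.inl d) (Sum.inl d') := by
  induction w generalizing d with
  | nil => exact reachable_inl_of_fst_eq (hu.trans hv.symm)
  | cons hadj w ih =>
    let e : G.Dart := ⟨(_, _), hadj⟩
    exact (reachable_inl_of_fst_eq hu).trans
      ((adj_inl_symm e).reachable.trans (ih (d := e.symm) rfl hv))

lemma reachable_inl_of_reachable {d d' : G.Dart} (h : G.Reachable d.fst d'.fst) :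
    (tube G).Reachable (Sum.inl d) (Sum.inl d') :=
  let ⟨w⟩ := h
  reachable_inl_of_walk w rfl rfl

lemma exists_adj_inr_inl (p : TubePair G) : ∃ d : G.Dart, (tube G).Adj (Sum.inr p) (Sum.inl d) :=
  ⟨⟨(p.1.1, p.1.2.out.1), p.2.2 _ p.1.2.out_fst_mem⟩, rfl, p.1.2.out_fst_mem⟩

end tube

theorem stmt_6_general {V : Type*} (G : SimpleGraph V) (hG : G.Connected)
    (hE : G.edgeSet.Nonempty) : (tube G).Connected := by
  obtain ⟨⟨a, b⟩, hab⟩ := hE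
  let d₀ : G.Dart := ⟨(a, b), hab⟩
  refine (connected_iff_exists_forall_reachable _).2 ⟨Sum.inl d₀, ?_⟩
  rintro (d | p)
  · exact tube.reachable_inl_of_reachable (hG.preconnected _ _)
  · obtain ⟨d, hpd⟩ := tube.exists_adj_inr_inl p
    exact (tube.reachable_inl_of_reachable (hG.preconnected _ _)).trans hpd.reachable.symm

/-- The symmetric tube of a finite connected simple graph with at least one edge is
connected. -/
theorem stmt_6 {V : Type*} [Fintype V] (G : SimpleGraph V) (hG : G.Connected)
    (hE : G.edgeSet.Nonempty) : (tube G).Connected :=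
  stmt_6_general G hG hE
end

section
/- Let n \geq 1 and let S_n = K_{1,n} be the star graph with center c and leaves labeled 1, ..., n. In the symmetric tube S_n^(0), the spanning subgraph T whose edge set consists of all n X-edges together with exactly those Y-edges joining the dart (c,a) to the pair-vertex (c,{a,b}) for which a < b or a = n, is a spanning tree of S_n^(0). -/
open SimpleGraph

variable {V : Type*}

/-- The star graph `Sₙ = K_{1,n}` on `Fin (n+1)`: the center is `c = 0` and the leaf labeled
`i ∈ {1, …, n}` is the element `i` of `Fin (n+1)` (so the leaf labeled `n` is `Fin.last n`). -/
def starGraph (n : ℕ) : SimpleGraph (Fin (n + 1)) where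
  Adj x y := (x = 0 ∧ y ≠ 0) ∨ (y = 0 ∧ x ≠ 0)
  symm := ⟨fun x y h => Or.symm h⟩
  loopless := ⟨by rintro x (⟨h1, h2⟩ | ⟨h1, h2⟩) <;> exact h2 h1⟩

/-- The spanning subgraph `T` of the symmetric tube `Sₙ⁽⁰⁾` whose edges are all the `n`
X-edges together with exactly those Y-edges joining the dart `(c,a)` to the pair-vertex
`(c,{a,b})` for which `a < b` or `a = n` (the largest leaf). -/
def starTubeTree (n : ℕ) : SimpleGraph (TubeVertex (_root_.starGraph n)) where
  Adj x y :=
    match x, y with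
    | Sum.inl d, Sum.inl d' => d' = d.symm
    | Sum.inl d, Sum.inr p => (p.1.1 = d.fst ∧ d.snd ∈ p.1.2) ∧
        ∃ b, p.1.2 = s(d.snd, b) ∧ (d.snd < b ∨ d.snd = Fin.last n)
    | Sum.inr p, Sum.inl d => (p.1.1 = d.fst ∧ d.snd ∈ p.1.2) ∧
        ∃ b, p.1.2 = s(d.snd, b) ∧ (d.snd < b ∨ d.snd = Fin.last n)
    | Sum.inr _, Sum.inr _ => False
  symm := by
    constructor
    rintro (d | p) (d' | p') h
    · simp only at h ⊢
      rw [h, SimpleGraph.Dart.symm_symm]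
    · exact h
    · exact h
    · exact h
  loopless := by
    constructor
    rintro (d | p) h
    · exact SimpleGraph.Dart.symm_ne d h.symm
    · exact h

/-!
Root the subgraph at the dart `(c, n)` and grade its vertices by distance to it: `(c, n)` has
height 0, `(n, c)` and the pairs `(c, {a, n})` height 1, the darts `(c, a)` with `a < n` height 2,
and the remaining darts `(a, c)` and pairs `(c, {a, b})` with `b < n` height 3. Every vertex other
than the root has exactly one neighbour of smaller height, namely `(c, {a, n})` for `(c, a)`, and
adjacent vertices have different heights. Such a grading forces a tree: descending reaches the
root, and the highest vertex of a cycle would have two lower neighbours on it.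
-/

namespace SimpleGraph

variable {G : SimpleGraph V} (h : V → ℕ)

theorem reachable_of_exists_adj_lt (r : V)
    (exists_lower : ∀ v, v ≠ r → ∃ u, G.Adj v u ∧ h u < h v) (v : V) : G.Reachable v r := by
  induction v using (measure h).wf.induction with
  | _ v ih =>
    by_cases hv : v = r
    · exact hv ▸ .rfl
    obtain ⟨u, hvu, hlt⟩ := exists_lower v hv
    exact hvu.reachable.trans (ih u hlt)

theorem isAcyclic_of_adj_lt_unique
    (lower_unique : ∀ ⦃v u u'⦄, G.Adj v u → G.Adj v u' → h u < h v → h u' < h v → u = u')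
    (height_ne : ∀ ⦃u v⦄, G.Adj u v → h u ≠ h v) : G.IsAcyclic := by
  classical
  intro v c hc
  obtain ⟨u, hu, hmax⟩ := c.support.toFinset.exists_max_image h ⟨v, by simp⟩
  rw [List.mem_toFinset] at hu
  have hc' : (c.rotate u hu).IsCycle := hc.rotate hu
  have lower : ∀ w, G.Adj u w → w ∈ (c.rotate u hu).support → h w < h u := fun w huw hw ↦
    (hmax w (by simpa [Walk.mem_support_rotate_iff] using hw)).lt_of_ne (height_ne huw).symm
  refine hc'.snd_ne_penultimate (lower_unique (Walk.adj_snd hc'.not_nil)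
    (Walk.adj_penultimate hc'.not_nil).symm ?_ ?_)
  · exact lower _ (Walk.adj_snd hc'.not_nil) (Walk.getVert_mem_support ..)
  · exact lower _ (Walk.adj_penultimate hc'.not_nil).symm (Walk.getVert_mem_support ..)

theorem isTree_of_adj_lt (r : V)
    (exists_lower : ∀ v, v ≠ r → ∃ u, G.Adj v u ∧ h u < h v)
    (lower_unique : ∀ ⦃v u u'⦄, G.Adj v u → G.Adj v u' → h u < h v → h u' < h v → u = u')
    (height_ne : ∀ ⦃u v⦄, G.Adj u v → h u ≠ h v) : G.IsTree where
  connected := (connected_iff_exists_forall_reachable G).mpr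
    ⟨r, fun v ↦ (reachable_of_exists_adj_lt h r exists_lower v).symm⟩
  isAcyclic := isAcyclic_of_adj_lt_unique h lower_unique height_ne

end SimpleGraph

namespace starTubeTree

variable {n : ℕ}

/- `centerDart a ha` is the dart `(c, a)`, its reverse is `(a, c)`, and `pairVertex a b hab ha`
is the pair-vertex `(c, {a, b})`. -/
def centerDart (a : Fin (n + 1)) (ha : a ≠ 0) : (_root_.starGraph n).Dart :=
  ⟨(0, a), Or.inl ⟨rfl, ha⟩⟩

def pairVertex (a b : Fin (n + 1)) (hab : a < b) (ha : a ≠ 0) :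
    TubePair (_root_.starGraph n) :=
  ⟨(0, s(a, b)), by simpa using hab.ne, by
    rintro x hx
    rcases Sym2.mem_iff.mp hx with rfl | rfl
    · exact Or.inl ⟨rfl, ha⟩
    · exact Or.inl ⟨rfl, Fin.ne_zero_of_lt hab⟩⟩

theorem dart_cases (d : (_root_.starGraph n).Dart) :
    ∃ a ha, d = centerDart a ha ∨ d = (centerDart a ha).symm := by
  rcases d with ⟨⟨x, y⟩, ⟨hx, hy⟩ | ⟨hy, hx⟩⟩
  · obtain rfl : x = 0 := hx
    exact ⟨y, hy, .inl rfl⟩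
  · obtain rfl : y = 0 := hy
    exact ⟨x, hx, .inr rfl⟩

theorem tubePair_cases (p : TubePair (_root_.starGraph n)) :
    ∃ a b hab ha, p = pairVertex a b hab ha := by
  obtain ⟨⟨v, e⟩, hdiag, hadj⟩ := p
  induction e using Sym2.inductionOn with
  | hf a b =>
  have hva := hadj a (Sym2.mem_mk_left a b)
  have hvb := hadj b (Sym2.mem_mk_right a b)
  have hab : a ≠ b := by simpa using hdiag
  obtain rfl : v = 0 := by
    by_contra hv
    exact hab ((hva.resolve_left (hv ·.1)).1.trans (hvb.resolve_left (hv ·.1)).1.symm)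
  have ha : a ≠ 0 := (hva.resolve_right fun h ↦ h.2 rfl).2
  have hb : b ≠ 0 := (hvb.resolve_right fun h ↦ h.2 rfl).2
  rcases hab.lt_or_gt with hlt | hlt
  · exact ⟨a, b, hlt, ha, rfl⟩
  · exact ⟨b, a, hlt, hb, Subtype.ext (Prod.ext rfl Sym2.eq_swap)⟩

@[elab_as_elim]
theorem vertex_induction {motive : TubeVertex (_root_.starGraph n) → Prop}
    (center : ∀ a ha, motive (.inl (centerDart a ha)))
    (leaf : ∀ a ha, motive (.inl (centerDart a ha).symm))
    (pair : ∀ a b hab ha, motive (.inr (pairVertex a b hab ha)))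
    (x : TubeVertex (_root_.starGraph n)) : motive x := by
  rcases x with d | p
  · obtain ⟨a, ha, rfl | rfl⟩ := dart_cases d
    exacts [center a ha, leaf a ha]
  · obtain ⟨a, b, hab, ha, rfl⟩ := tubePair_cases p
    exact pair a b hab ha

variable {a b x : Fin (n + 1)} {ha : a ≠ 0} {hx : x ≠ 0} {hab : a < b}

@[simp] theorem centerDart_inj {hb : b ≠ 0} : centerDart a ha = centerDart b hb ↔ a = b := by
  simp [centerDart, Dart.ext_iff]

@[simp] theorem centerDart_ne_centerDart_symm {hb : b ≠ 0} :
    centerDart a ha ≠ (centerDart b hb).symm := by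
  simp [centerDart, Dart.ext_iff, hb.symm]

@[simp] theorem centerDart_symm_ne_centerDart {hb : b ≠ 0} :
    (centerDart a ha).symm ≠ centerDart b hb := by
  simp [centerDart, Dart.ext_iff, ha]

@[simp] theorem pairVertex_inj {a' b' : Fin (n + 1)} {hab' : a' < b'} {ha' : a' ≠ 0} :
    pairVertex a b hab ha = pairVertex a' b' hab' ha' ↔ a = a' ∧ b = b' := by
  simp only [pairVertex, Subtype.mk.injEq, Prod.mk.injEq, true_and, Sym2.eq_iff]
  grind

/- The distance to the root `(c, n)` in `starTubeTree n`. -/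
def height : TubeVertex (_root_.starGraph n) → ℕ
  | .inl d => if d.fst = 0 then (if d.snd = Fin.last n then 0 else 2)
      else if d.fst = Fin.last n then 1 else 3
  | .inr p => if Fin.last n ∈ p.1.2 then 1 else 3

@[simp] theorem height_centerDart :
    height (.inl (centerDart a ha)) = if a = Fin.last n then 0 else 2 := rfl

@[simp] theorem height_centerDart_symm :
    height (.inl (centerDart a ha).symm) = if a = Fin.last n then 1 else 3 := if_neg ha

@[simp] theorem height_pairVertex :
    height (.inr (pairVertex a b hab ha)) = if b = Fin.last n then 1 else 3 := by
  simp [height, pairVertex, eq_comm (a := Fin.last n), Fin.ne_last_of_lt hab]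

@[simp] theorem adj_centerDart_pairVertex :
    (starTubeTree n).Adj (.inl (centerDart x hx)) (.inr (pairVertex a b hab ha)) ↔
      x = a ∨ x = b ∧ b = Fin.last n := by
  simp only [starTubeTree, centerDart, pairVertex, true_and]
  have := Fin.ne_last_of_lt hab
  constructor
  · rintro ⟨hmem, c, hc, hlt⟩
    rw [Sym2.eq_iff] at hc
    grind
  · rintro (rfl | ⟨rfl, hlast⟩)
    · exact ⟨Sym2.mem_mk_left _ _, b, rfl, .inl hab⟩
    · exact ⟨Sym2.mem_mk_right _ _, a, Sym2.eq_swap, .inr hlast⟩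

@[simp] theorem adj_inl_inl {d e : (_root_.starGraph n).Dart} :
    (starTubeTree n).Adj (.inl d) (.inl e) ↔ e = d.symm := Iff.rfl

@[simp] theorem not_adj_inr_inr (p q : TubePair (_root_.starGraph n)) :
    ¬ (starTubeTree n).Adj (.inr p) (.inr q) := id

@[simp] theorem not_adj_centerDart_symm (p : TubePair (_root_.starGraph n)) :
    ¬ (starTubeTree n).Adj (.inl (centerDart x hx).symm) (.inr p) := by
  obtain ⟨a, b, hab, ha, rfl⟩ := tubePair_cases p
  exact fun h ↦ hx h.1.1.symm

@[simp] theorem adj_pairVertex_centerDart :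
    (starTubeTree n).Adj (.inr (pairVertex a b hab ha)) (.inl (centerDart x hx)) ↔
      x = a ∨ x = b ∧ b = Fin.last n :=
  (starTubeTree n).adj_comm _ _ |>.trans adj_centerDart_pairVertex

@[simp] theorem not_adj_inr_centerDart_symm (p : TubePair (_root_.starGraph n)) :
    ¬ (starTubeTree n).Adj (.inr p) (.inl (centerDart x hx).symm) :=
  fun h ↦ not_adj_centerDart_symm p h.symm

theorem last_ne_zero (hn : 1 ≤ n) : Fin.last n ≠ 0 := by
  rw [Ne, Fin.ext_iff, Fin.val_last, Fin.val_zero]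
  omega

theorem exists_adj_height_lt (hn : 1 ≤ n) (v : TubeVertex (_root_.starGraph n))
    (hv : v ≠ .inl (centerDart (Fin.last n) (last_ne_zero hn))) :
    ∃ u, (starTubeTree n).Adj v u ∧ height u < height v := by
  induction v using vertex_induction with
  | center a ha =>
    have hlast : a ≠ Fin.last n := by rintro rfl; exact hv rfl
    refine ⟨.inr (pairVertex a _ (Fin.lt_last_iff_ne_last.mpr hlast) ha), ?_, ?_⟩
    · exact adj_centerDart_pairVertex.mpr (.inl rfl)
    · simp [hlast]
  | leaf a ha =>
    refine ⟨.inl (centerDart a ha), (Dart.symm_symm _).symm, ?_⟩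
    simp only [height_centerDart, height_centerDart_symm]
    split_ifs <;> omega
  | pair a b hab ha =>
    by_cases hb : b = Fin.last n
    · refine ⟨.inl (centerDart b (Fin.ne_zero_of_lt hab)), ?_, by simp [hb]⟩
      exact (starTubeTree n).adj_symm (adj_centerDart_pairVertex.mpr (.inr ⟨rfl, hb⟩))
    · refine ⟨.inl (centerDart a ha), ?_, by simp [hb, Fin.ne_last_of_lt hab]⟩
      exact (starTubeTree n).adj_symm (adj_centerDart_pairVertex.mpr (.inl rfl))

/- Every edge joins a dart `(c, a)`, of even height, to a vertex of odd height. -/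
theorem height_ne_of_adj {u v : TubeVertex (_root_.starGraph n)}
    (huv : (starTubeTree n).Adj u v) : height u ≠ height v := by
  induction u using vertex_induction <;> induction v using vertex_induction
  all_goals simp only [adj_inl_inl, adj_centerDart_pairVertex, adj_pairVertex_centerDart,
    not_adj_centerDart_symm, not_adj_inr_centerDart_symm, not_adj_inr_inr,
    centerDart_ne_centerDart_symm, centerDart_symm_ne_centerDart, Dart.symm_symm,
    height_centerDart, height_centerDart_symm, height_pairVertex, ne_eq] at huv ⊢
  all_goals split_ifs <;> simp

theorem eq_of_adj_height_lt {v u u' : TubeVertex (_root_.starGraph n)}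
    (hu : (starTubeTree n).Adj v u) (hu' : (starTubeTree n).Adj v u')
    (hlt : height u < height v) (hlt' : height u' < height v) : u = u' := by
  induction v using vertex_induction <;> induction u using vertex_induction <;>
    induction u' using vertex_induction
  all_goals simp only [adj_inl_inl, adj_centerDart_pairVertex, adj_pairVertex_centerDart,
    not_adj_centerDart_symm, not_adj_inr_centerDart_symm, not_adj_inr_inr,
    centerDart_ne_centerDart_symm, centerDart_symm_ne_centerDart, Dart.symm_symm,
    Dart.symm_involutive.injective.eq_iff, centerDart_inj, pairVertex_inj, Sum.inl.injEq,
    Sum.inr.injEq, reduceCtorEq, height_centerDart, height_centerDart_symm,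
    height_pairVertex] at hu hu' hlt hlt' ⊢
  all_goals split_ifs at hlt hlt' <;> grind

theorem le_tube (n : ℕ) : starTubeTree n ≤ tube (_root_.starGraph n) := by
  rintro (d | p) (d' | p') h
  exacts [h, h.1, h.1, h]

end starTubeTree

/-- For every `n ≥ 1`, the spanning subgraph of `Sₙ⁽⁰⁾` consisting of all `n` X-edges
together with exactly those Y-edges joining the dart `(c,a)` to the pair-vertex `(c,{a,b})`
for which `a < b` or `a = n` is a spanning tree of `Sₙ⁽⁰⁾`. -/
theorem stmt_7 (n : ℕ) (hn : 1 ≤ n) :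
    starTubeTree n ≤ tube (_root_.starGraph n) ∧ (starTubeTree n).IsTree :=
  ⟨starTubeTree.le_tube n,
    isTree_of_adj_lt starTubeTree.height _ (starTubeTree.exists_adj_height_lt hn)
      (fun _ _ _ ↦ starTubeTree.eq_of_adj_height_lt) (fun _ _ ↦ starTubeTree.height_ne_of_adj)⟩
end

section
/- Let G be a finite connected simple graph with at least one edge whose vertex set carries a linear order, and let T_G be a spanning tree of G. For each vertex v, let M(v) denote the largest neighbor of v with respect to the linear order. Then the spanning subgraph T of the symmetric tube G^(0) whose edge set consists of the X-edges corresponding to the edges of T_G together with exactly those Y-edges joining the dart (v,a) to the pair-vertex (v,{a,b}) for which a < b or a = M(v), is a spanning tree of G^(0). -/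
open SimpleGraph

variable {V : Type*}

/-- Given a spanning tree `T` of `G` and a choice function `M` (intended to pick the largest
neighbor of each vertex), the spanning subgraph of the symmetric tube `G⁽⁰⁾` whose edges are
the X-edges corresponding to the edges of `T` together with exactly those Y-edges joining the
dart `(v,a)` to the pair-vertex `(v,{a,b})` for which `a < b` or `a = M v`. -/
def tubeTree [LinearOrder V] (G : SimpleGraph V) (T : SimpleGraph V) (M : V → V) :
    SimpleGraph (TubeVertex G) where
  Adj x y :=
    match x, y with
    | Sum.inl d, Sum.inl d' => d' = d.symm ∧ T.Adj d.fst d.snd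
    | Sum.inl d, Sum.inr p => (p.1.1 = d.fst ∧ d.snd ∈ p.1.2) ∧
        ∃ b, p.1.2 = s(d.snd, b) ∧ (d.snd < b ∨ d.snd = M d.fst)
    | Sum.inr p, Sum.inl d => (p.1.1 = d.fst ∧ d.snd ∈ p.1.2) ∧
        ∃ b, p.1.2 = s(d.snd, b) ∧ (d.snd < b ∨ d.snd = M d.fst)
    | Sum.inr _, Sum.inr _ => False
  symm := by
    constructor
    rintro (d | p) (d' | p') h
    · simp only at h ⊢
      obtain ⟨h1, h2⟩ := h
      subst h1
      exact ⟨(SimpleGraph.Dart.symm_symm d).symm, h2.symm⟩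
    · exact h
    · exact h
    · exact h
  loopless := by
    constructor
    rintro (d | p) h
    · exact SimpleGraph.Dart.symm_ne d h.1.symm
    · exact h

open Set

/-!
Every vertex of the subgraph is joined to the dart `(v, M v)` of its base vertex `v`: a dart
`(v, a)` through the pair-vertex `(v, {a, M v})`, a pair-vertex `(v, {a, b})` with `a < b` through
`(v, a)`. The darts `(u, M u)` and `(w, M w)` are joined through the X-edge `(u, w)`–`(w, u)`
whenever `u w` is an edge of `T_G`, so the subgraph is connected. It has fewer edges than
vertices: its X-edges inject into the `|V| - 1` edges of `T_G`, and its Y-edges inject into the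
vertices other than the `|V|` darts `(v, M v)`.
-/

instance SimpleGraph.Dart.finite [Finite V] (G : SimpleGraph V) : Finite G.Dart :=
  Finite.of_injective Dart.toProd fun _ _ => Dart.ext _ _

lemma Sym2.exists_lt_of_not_isDiag [LinearOrder V] {z : Sym2 V} (hz : ¬ z.IsDiag) :
    ∃ a b, a < b ∧ z = s(a, b) := by
  induction z using Sym2.ind with
  | _ a b =>
    rcases lt_trichotomy a b with h | rfl | h
    · exact ⟨a, b, h, rfl⟩
    · exact absurd (Sym2.mk_isDiag_iff.mpr rfl) hz
    · exact ⟨b, a, h, Sym2.eq_swap⟩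

lemma Sym2.left_eq_of_mk_eq_mk_of_lt [LinearOrder V] {a b a' b' : V} (h : s(a, b) = s(a', b'))
    (hab : a < b) (hab' : a' < b') : a = a' := by
  rcases Sym2.eq_iff.mp h with ⟨h, -⟩ | ⟨rfl, rfl⟩
  · exact h
  · exact absurd (hab.trans hab') (lt_irrefl a)

lemma SimpleGraph.isTree_of_connected_of_card_edgeSet_add_one_le {W : Type*} [Finite W]
    {H : SimpleGraph W} (hc : H.Connected) (h : Nat.card H.edgeSet + 1 ≤ Nat.card W) :
    H.IsTree :=
  isTree_iff_connected_and_card.mpr ⟨hc, h.antisymm hc.card_vert_le_card_edgeSet_add_one⟩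

section

variable {G T : SimpleGraph V}

def TubeVertex.base : TubeVertex G → V := Sum.elim (·.fst) (·.1.1)

def maxDart {M : V → V} (hadj : ∀ v, G.Adj v (M v)) (v : V) : G.Dart := ⟨(v, M v), hadj v⟩

def tubeXEdge (d : G.Dart) : Sym2 (TubeVertex G) := s(.inl d, .inl d.symm)

def tubeYEdge (dp : G.Dart × TubePair G) : Sym2 (TubeVertex G) := s(.inl dp.1, .inr dp.2)

lemma ncard_image_tubeXEdge_le [Finite V] :
    (tubeXEdge '' {d : G.Dart | T.Adj d.fst d.snd}).ncard ≤ T.edgeSet.ncard := by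
  refine Set.ncard_le_ncard_of_injOn (Sym2.map TubeVertex.base) ?_ ?_
  · rintro _ ⟨d, hd, rfl⟩
    exact hd
  · rintro _ ⟨d, -, rfl⟩ _ ⟨d', -, rfl⟩ h
    rcases (dart_edge_eq_iff d d').mp h with rfl | rfl
    · rfl
    · exact Sym2.eq_swap

end

section

variable [LinearOrder V] {G T : SimpleGraph V} {M : V → V}

lemma tubeTree_le_tube : tubeTree G T M ≤ tube G := by
  rintro (d | p) (d' | p') h
  · exact h.1
  · exact h.1
  · exact h.1
  · exact h.elim

lemma tubeTree_adj_inl_inr {d : G.Dart} {p : TubePair G} :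
    (tubeTree G T M).Adj (.inl d) (.inr p) ↔
      p.1.1 = d.fst ∧ ∃ b, p.1.2 = s(d.snd, b) ∧ (d.snd < b ∨ d.snd = M d.fst) := by
  refine ⟨fun ⟨⟨hv, _⟩, hb⟩ => ⟨hv, hb⟩,
    fun ⟨hv, b, hp, hb⟩ => ⟨⟨hv, ?_⟩, b, hp, hb⟩⟩
  rw [hp]
  exact Sym2.mem_mk_left _ _

def tubeTreeYAdj (G T : SimpleGraph V) (M : V → V) : Set (G.Dart × TubePair G) :=
  {dp | (tubeTree G T M).Adj (.inl dp.1) (.inr dp.2)}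

lemma edgeSet_tubeTree_subset :
    (tubeTree G T M).edgeSet ⊆
      tubeXEdge '' {d | T.Adj d.fst d.snd} ∪ tubeYEdge '' tubeTreeYAdj G T M := by
  intro e he
  induction e using Sym2.ind with
  | _ x y =>
    rcases x with d | p <;> rcases y with d' | p'
    · obtain ⟨rfl, h⟩ := he
      exact .inl ⟨d, h, rfl⟩
    · exact .inr ⟨(d, p'), he, rfl⟩
    · exact .inr ⟨(d', p), ((tubeTree G T M).mem_edgeSet.mp he).symm, Sym2.eq_swap⟩
    · exact he.elim

/-- A Y-edge `{(v, a), (v, {a, b})}` is charged to the dart `(v, b)` when `a = M v`, and to the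
pair-vertex otherwise; this charges no Y-edge to a dart `(v, M v)`. -/
noncomputable def tubeYEdgeCode (M : V → V) (dp : G.Dart × TubePair G) : TubeVertex G :=
  if h : dp.1.snd ∈ dp.2.1.2 ∧ dp.1.snd = M dp.2.1.1 then
    .inl ⟨(dp.2.1.1, Sym2.Mem.other h.1), dp.2.2.2 _ (Sym2.other_mem h.1)⟩
  else .inr dp.2

lemma tubeYEdgeCode_injOn : Set.InjOn (tubeYEdgeCode M) (tubeTreeYAdj G T M) := by
  rintro ⟨d, p⟩ hdp ⟨d', p'⟩ hdp' h
  obtain ⟨hv, b, hb, hlt⟩ := (tubeTree_adj_inl_inr (T := T)).mp hdp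
  obtain ⟨hv', b', hb', hlt'⟩ := (tubeTree_adj_inl_inr (T := T)).mp hdp'
  unfold tubeYEdgeCode at h
  split_ifs at h with h1 h2 h2'
  · have hd := Sum.inl_injective h
    have hbase : p.1.1 = p'.1.1 := congrArg (·.fst) hd
    have hother : Sym2.Mem.other h1.1 = Sym2.Mem.other h2.1 := congrArg (·.snd) hd
    have hsnd : d.snd = d'.snd := by rw [h1.2, h2.2, hbase]
    obtain rfl : d = d' := Dart.ext _ _ (Prod.ext (hv.symm.trans (hbase.trans hv')) hsnd)
    obtain rfl : p = p' := Subtype.ext (Prod.ext hbase (by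
      rw [← Sym2.other_spec h1.1, ← Sym2.other_spec h2.1, hother]))
    rfl
  · obtain rfl := Sum.inr_injective h
    have hlt_of {d : G.Dart} {b : V} (hv : p.1.1 = d.fst) (hb : p.1.2 = s(d.snd, b))
        (hlt : d.snd < b ∨ d.snd = M d.fst) (h : ¬ (d.snd ∈ p.1.2 ∧ d.snd = M p.1.1)) :
        d.snd < b :=
      hlt.resolve_right fun hM => h ⟨hb ▸ Sym2.mem_mk_left _ _, hv ▸ hM⟩
    have hsnd := Sym2.left_eq_of_mk_eq_mk_of_lt (hb.symm.trans hb')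
      (hlt_of hv hb hlt h1) (hlt_of hv' hb' hlt' h2')
    exact congrArg (·, p) (Dart.ext _ _ (Prod.ext (hv.symm.trans hv') hsnd))

variable (hadj : ∀ v, G.Adj v (M v))
include hadj

lemma tubeYEdgeCode_ne_maxDart {d : G.Dart} {p : TubePair G} (v : V) :
    tubeYEdgeCode M (d, p) ≠ .inl (maxDart hadj v) := by
  unfold tubeYEdgeCode
  split_ifs with h
  · intro hv
    have hd := Sum.inl_injective hv
    have hfst : p.1.1 = v := congrArg (·.fst) hd
    have hsnd : Sym2.Mem.other h.1 = M v := congrArg (·.snd) hd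
    exact Sym2.other_ne p.2.1 h.1 (by rw [hsnd, ← hfst, h.2])
  · exact Sum.inr_ne_inl

lemma ncard_tubeTreeYAdj_add_card_le [Finite V] :
    (tubeTreeYAdj G T M).ncard + Nat.card V ≤ Nat.card (TubeVertex G) := by
  set f : V → TubeVertex G := fun v => .inl (maxDart hadj v)
  have hf : Function.Injective f := fun u w h => congrArg (·.fst) (Sum.inl_injective h)
  have hmaps : Set.MapsTo (tubeYEdgeCode M) (tubeTreeYAdj G T M) (Set.range f)ᶜ := by
    rintro ⟨d, p⟩ - ⟨v, hv⟩
    exact tubeYEdgeCode_ne_maxDart hadj v hv.symm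
  calc _ ≤ (Set.range f)ᶜ.ncard + (Set.range f).ncard :=
        add_le_add (Set.ncard_le_ncard_of_injOn _ hmaps tubeYEdgeCode_injOn)
          (Set.ncard_range_of_injective hf).ge
    _ = Nat.card (TubeVertex G) := by rw [add_comm, Set.ncard_add_ncard_compl]

lemma card_edgeSet_tubeTree_add_one_le [Finite V] (hT : T.IsTree) :
    Nat.card (tubeTree G T M).edgeSet + 1 ≤ Nat.card (TubeVertex G) := by
  have hTcard := (isTree_iff_connected_and_card.mp hT).2
  rw [Nat.card_coe_set_eq] at hTcard ⊢
  have hK := (Set.ncard_le_ncard (edgeSet_tubeTree_subset (G := G) (T := T) (M := M))).trans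
    (Set.ncard_union_le _ _)
  have hX := ncard_image_tubeXEdge_le (G := G) (T := T)
  have hY := Set.ncard_image_le (f := tubeYEdge) (s := tubeTreeYAdj G T M)
  have hY' := ncard_tubeTreeYAdj_add_card_le (T := T) hadj
  omega

variable (hmax : ∀ v w, G.Adj v w → w ≤ M v)
include hmax

lemma tubeTree_reachable_maxDart_of_dart (d : G.Dart) :
    (tubeTree G T M).Reachable (.inl d) (.inl (maxDart hadj d.fst)) := by
  by_cases hd : d.snd = M d.fst
  · rw [show d = maxDart hadj d.fst from Dart.ext _ _ (Prod.ext rfl hd)]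
    exact .refl _
  have hlt : d.snd < M d.fst := (hmax _ _ d.adj).lt_of_ne hd
  let p : TubePair G := ⟨(d.fst, s(d.snd, M d.fst)), Sym2.mk_isDiag_iff.not.mpr hd, by
    intro x hx
    rcases Sym2.mem_iff.mp hx with rfl | rfl
    · exact d.adj
    · exact hadj _⟩
  have hdp : (tubeTree G T M).Adj (.inl d) (.inr p) :=
    tubeTree_adj_inl_inr.mpr ⟨rfl, M d.fst, rfl, .inl hlt⟩
  have hpm : (tubeTree G T M).Adj (.inr p) (.inl (maxDart hadj d.fst)) :=
    (tubeTree_adj_inl_inr.mpr ⟨rfl, d.snd, Sym2.eq_swap, .inr rfl⟩).symm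
  exact hdp.reachable.trans hpm.reachable

lemma tubeTree_reachable_maxDart_of_pair (p : TubePair G) :
    (tubeTree G T M).Reachable (.inr p) (.inl (maxDart hadj p.1.1)) := by
  obtain ⟨a, b, hab, hp⟩ := Sym2.exists_lt_of_not_isDiag p.2.1
  let d : G.Dart := ⟨(p.1.1, a), p.2.2 a (hp ▸ Sym2.mem_mk_left a b)⟩
  have hpd : (tubeTree G T M).Adj (.inl d) (.inr p) :=
    tubeTree_adj_inl_inr.mpr ⟨rfl, b, hp, .inl hab⟩
  exact hpd.symm.reachable.trans (tubeTree_reachable_maxDart_of_dart hadj hmax d)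

lemma tubeTree_reachable_maxDart (x : TubeVertex G) :
    (tubeTree G T M).Reachable x (.inl (maxDart hadj x.base)) := by
  rcases x with d | p
  · exact tubeTree_reachable_maxDart_of_dart hadj hmax d
  · exact tubeTree_reachable_maxDart_of_pair hadj hmax p

lemma tubeTree_reachable_maxDart_of_adj (hle : T ≤ G) {u w : V} (h : T.Adj u w) :
    (tubeTree G T M).Reachable (.inl (maxDart hadj u)) (.inl (maxDart hadj w)) := by
  let d : G.Dart := ⟨(u, w), hle h⟩
  have hX : (tubeTree G T M).Adj (.inl d) (.inl d.symm) := ⟨rfl, h⟩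
  exact (tubeTree_reachable_maxDart_of_dart hadj hmax d).symm.trans
    (hX.reachable.trans (tubeTree_reachable_maxDart_of_dart hadj hmax d.symm))

lemma tubeTree_connected (hle : T ≤ G) (hT : T.Connected) : (tubeTree G T M).Connected := by
  have hroots (u w : V) :
      (tubeTree G T M).Reachable (.inl (maxDart hadj u)) (.inl (maxDart hadj w)) := by
    rw [reachable_iff_reflTransGen]
    exact Relation.ReflTransGen.lift' (fun v => (.inl (maxDart hadj v) : TubeVertex G))
      (fun u w h => (reachable_iff_reflTransGen _ _).mp
        (tubeTree_reachable_maxDart_of_adj hadj hmax hle h)) u w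
      ((reachable_iff_reflTransGen _ _).mp (hT.preconnected u w))
  have : Nonempty (TubeVertex G) := ⟨.inl (maxDart hadj hT.nonempty.some)⟩
  exact Connected.mk fun x y => (tubeTree_reachable_maxDart hadj hmax x).trans
    ((hroots _ _).trans (tubeTree_reachable_maxDart hadj hmax y).symm)

end

theorem stmt_8_general {V : Type*} [Fintype V] [LinearOrder V] (G : SimpleGraph V)
    (T_G : SimpleGraph V) (hle : T_G ≤ G) (htree : T_G.IsTree)
    (M : V → V) (hM : ∀ v, G.Adj v (M v) ∧ ∀ w, G.Adj v w → w ≤ M v) :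
    tubeTree G T_G M ≤ tube G ∧ (tubeTree G T_G M).IsTree := by
  have hadj (v : V) : G.Adj v (M v) := (hM v).1
  have hmax (v w : V) : G.Adj v w → w ≤ M v := (hM v).2 w
  exact ⟨tubeTree_le_tube, isTree_of_connected_of_card_edgeSet_add_one_le
    (tubeTree_connected hadj hmax hle htree.connected)
    (card_edgeSet_tubeTree_add_one_le hadj htree)⟩

/-- Let `G` be a finite connected simple graph with at least one edge whose vertex set
carries a linear order, let `T_G` be a spanning tree of `G`, and for each vertex `v` let
`M v` be the largest neighbor of `v`.  Then the spanning subgraph of the symmetric tube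
`G⁽⁰⁾` whose edges are the X-edges corresponding to the edges of `T_G` together with exactly
those Y-edges joining the dart `(v,a)` to the pair-vertex `(v,{a,b})` for which `a < b` or
`a = M v` is a spanning tree of `G⁽⁰⁾`. -/
theorem stmt_8 {V : Type*} [Fintype V] [LinearOrder V] (G : SimpleGraph V)
    (hG : G.Connected) (hE : G.edgeSet.Nonempty)
    (T_G : SimpleGraph V) (hle : T_G ≤ G) (htree : T_G.IsTree)
    (M : V → V) (hM : ∀ v, G.Adj v (M v) ∧ ∀ w, G.Adj v w → w ≤ M v) :
    tubeTree G T_G M ≤ tube G ∧ (tubeTree G T_G M).IsTree :=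
  stmt_8_general G T_G hle htree M hM
end

section
/- Let G be a finite connected simple graph with m vertices and n \geq 1 edges whose vertex set carries a linear order, let T_G be a spanning tree of G, and let T be the spanning tree of the symmetric tube G^(0) whose edge set consists of the X-edges corresponding to the edges of T_G together with those Y-edges joining the dart (v,a) to the pair-vertex (v,{a,b}) for which a < b or a = M(v), where M(v) is the largest neighbor of v. Then the number of edges of G^(0) not in T equals (n - m + 1) + \sum_{v \in V(G)} \binom{deg(v) - 1}{2}. -/
open SimpleGraph

variable {V : Type*}

/-!
Every edge of `G⁽⁰⁾` is either an X-edge `(v,u)–(u,v)`, which lies outside the tree exactly when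
`{v,u}` lies outside `T_G`, or a Y-edge `(v,a)–(v,{a,b})`, which lies outside the tree exactly when
`b < a` and `a ≠ M v`. The X-edges thus contribute `n - (m - 1)`. Since `M v` is the largest
neighbour of `v`, the Y-edges at `v` correspond to the pairs `b < a` of neighbours of `v` other
than `M v`, of which there are `C(deg v - 1, 2)`.
-/

open Finset

theorem Finset.card_filter_lt_offDiag {α : Type*} [LinearOrder α] (s : Finset α) :
    #{p ∈ s.offDiag | p.1 < p.2} = (#s).choose 2 := by
  have h := sum_sym2_filter_not_isDiag s (fun _ => 1)
  simp only [sum_const, smul_eq_mul, mul_one] at h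
  rw [← h, ← Sym2.card_image_offDiag, ← Sym2.filter_image_mk_not_isDiag]
  congr 1
  ext z
  induction z using Sym2.ind
  simp only [mem_filter, Finset.mk_mem_sym2_iff, mem_image, Sym2.mk_isDiag_iff, mem_product]
  aesop

namespace SimpleGraph

variable {G : SimpleGraph V}

theorem image_dart_edge_setOf_not_adj (T : SimpleGraph V) :
    Dart.edge '' {d : G.Dart | ¬ T.Adj d.fst d.snd} = G.edgeSet \ T.edgeSet := by
  ext e
  induction e using Sym2.ind with
  | _ u v =>
    constructor
    · rintro ⟨d, hd, he⟩
      rw [← he]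
      exact ⟨d.edge_mem, hd⟩
    · rintro ⟨huv, hT⟩
      exact ⟨⟨(u, v), huv⟩, hT, rfl⟩

theorem IsTree.cast_ncard_edgeSet_sdiff [Fintype V] [DecidableRel G.Adj] {T : SimpleGraph V}
    (hle : T ≤ G) (hT : T.IsTree) :
    ((G.edgeSet \ T.edgeSet).ncard : ℤ) = #G.edgeFinset - Fintype.card V + 1 := by
  classical
  rw [Set.cast_ncard_sdiff (edgeSet_mono hle) (Set.toFinite _), ← coe_edgeFinset,
    ← coe_edgeFinset, Set.ncard_coe_finset, Set.ncard_coe_finset, ← hT.card_edgeFinset]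
  push_cast
  ring

def tubeProj : TubeVertex G → V := Sum.elim (fun d => d.fst) fun p => p.1.1

def tubeXEdge (d : G.Dart) : Sym2 (TubeVertex G) := s(.inl d, .inl d.symm)

def tubePair {v a b : V} (ha : G.Adj v a) (hb : G.Adj v b) (hab : a ≠ b) : TubePair G :=
  ⟨(v, s(a, b)), by simpa using hab, by simp [ha, hb]⟩

def tubeYEdge {v a b : V} (ha : G.Adj v a) (hb : G.Adj v b) (hab : a ≠ b) :
    Sym2 (TubeVertex G) :=
  s(.inl ⟨(v, a), ha⟩, .inr (tubePair ha hb hab))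

theorem tubeXEdge_symm (d : G.Dart) : tubeXEdge d.symm = tubeXEdge d := by
  rw [tubeXEdge, tubeXEdge, Dart.symm_symm, Sym2.eq_swap]

theorem map_tubeProj_tubeXEdge (d : G.Dart) : Sym2.map tubeProj (tubeXEdge d) = d.edge := rfl

theorem injOn_map_tubeProj_range_tubeXEdge :
    Set.InjOn (Sym2.map tubeProj) (Set.range (tubeXEdge (G := G))) := by
  rintro _ ⟨d, rfl⟩ _ ⟨d', rfl⟩ h
  rw [map_tubeProj_tubeXEdge, map_tubeProj_tubeXEdge, dart_edge_eq_iff] at h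
  rcases h with rfl | rfl
  exacts [rfl, tubeXEdge_symm d']

theorem tubeXEdge_ne_tubeYEdge (d : G.Dart) {v a b : V} (ha : G.Adj v a) (hb : G.Adj v b)
    (hab : a ≠ b) : tubeXEdge d ≠ tubeYEdge ha hb hab := by
  simp [tubeXEdge, tubeYEdge]

theorem tubeYEdge_inj {v a b v' a' b' : V} {ha : G.Adj v a} {hb : G.Adj v b} {hab : a ≠ b}
    {ha' : G.Adj v' a'} {hb' : G.Adj v' b'} {hab' : a' ≠ b'} :
    tubeYEdge ha hb hab = tubeYEdge ha' hb' hab' ↔ v = v' ∧ a = a' ∧ b = b' := by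
  constructor
  · intro h
    simp only [tubeYEdge, tubePair, Sym2.eq, Sym2.rel_iff', Prod.mk.injEq, Sum.inl.injEq,
      Sum.inr.injEq, Dart.ext_iff, Subtype.mk.injEq] at h
    grind
  · rintro ⟨rfl, rfl, rfl⟩
    rfl

theorem exists_tubeYEdge_eq {d : G.Dart} {p : TubePair G} (hv : p.1.1 = d.fst)
    (ha : d.snd ∈ p.1.2) :
    ∃ (b : V) (hb : G.Adj d.fst b) (hab : d.snd ≠ b),
      tubeYEdge d.adj hb hab = s(.inl d, .inr p) := by
  obtain ⟨⟨v, z⟩, hdiag, hadj⟩ := p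
  obtain ⟨b, rfl⟩ := Sym2.mem_iff_exists.1 ha
  dsimp only at hv
  subst hv
  exact ⟨b, hadj b (Sym2.mem_mk_right _ _), by simpa using hdiag, rfl⟩

theorem mem_edgeSet_tube {e : Sym2 (TubeVertex G)} :
    e ∈ (tube G).edgeSet ↔ (∃ d, tubeXEdge d = e) ∨
      ∃ (v a b : V) (ha : G.Adj v a) (hb : G.Adj v b) (hab : a ≠ b), tubeYEdge ha hb hab = e := by
  constructor
  · induction e using Sym2.ind with
    | _ x y =>
      intro h
      rcases x with d | p <;> rcases y with d' | p'
      · obtain rfl : d' = d.symm := h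
        exact .inl ⟨d, rfl⟩
      · obtain ⟨b, hb, hab, he⟩ := exists_tubeYEdge_eq h.1 h.2
        exact .inr ⟨_, _, b, d.adj, hb, hab, he⟩
      · obtain ⟨b, hb, hab, he⟩ := exists_tubeYEdge_eq h.1 h.2
        exact .inr ⟨_, _, b, d'.adj, hb, hab, he.trans Sym2.eq_swap⟩
      · exact h.elim
  · rintro (⟨d, rfl⟩ | ⟨v, a, b, ha, hb, hab, rfl⟩)
    · exact (rfl : d.symm = d.symm)
    · exact ⟨rfl, Sym2.mem_mk_left a b⟩

theorem ncard_image_tubeXEdge (S : Set G.Dart) :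
    (tubeXEdge '' S).ncard = (Dart.edge '' S).ncard := by
  rw [← (injOn_map_tubeProj_range_tubeXEdge.mono
    (Set.image_subset_range _ _)).ncard_image, Set.image_image]
  rfl

variable [LinearOrder V] {T : SimpleGraph V} {M : V → V}

theorem tubeXEdge_mem_edgeSet_tubeTree {d : G.Dart} :
    tubeXEdge d ∈ (tubeTree G T M).edgeSet ↔ T.Adj d.fst d.snd := by
  simp [tubeXEdge, tubeTree]

theorem tubeYEdge_mem_edgeSet_tubeTree {v a b : V} {ha : G.Adj v a} {hb : G.Adj v b}
    {hab : a ≠ b} : tubeYEdge ha hb hab ∈ (tubeTree G T M).edgeSet ↔ a < b ∨ a = M v := by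
  simp [tubeYEdge, tubePair, tubeTree, hab.symm]

abbrev NonTreeYIndex (G : SimpleGraph V) (M : V → V) : Type _ :=
  Σ v : V, {ba : V × V // G.Adj v ba.2 ∧ G.Adj v ba.1 ∧ ba.1 < ba.2 ∧ ba.2 ≠ M v}

def NonTreeYIndex.edge : NonTreeYIndex G M → Sym2 (TubeVertex G) :=
  fun ⟨_, _, ha, hb, hlt, _⟩ => tubeYEdge ha hb hlt.ne'

theorem NonTreeYIndex.edge_injective :
    Function.Injective (NonTreeYIndex.edge (G := G) (M := M)) := by
  rintro ⟨v, ⟨b, a⟩, _, _, _, _⟩ ⟨v', ⟨b', a'⟩, _, _, _, _⟩ he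
  obtain ⟨rfl, rfl, rfl⟩ := tubeYEdge_inj.1 he
  rfl

theorem disjoint_image_tubeXEdge_range_nonTreeYIndex_edge (S : Set G.Dart) :
    Disjoint (tubeXEdge '' S) (Set.range (NonTreeYIndex.edge (G := G) (M := M))) :=
  Set.disjoint_left.2 fun _ ⟨d, _, hd⟩ ⟨⟨_, _, _, _, _, _⟩, hi⟩ =>
    tubeXEdge_ne_tubeYEdge d _ _ _ (hd.trans hi.symm)

theorem edgeSet_tube_sdiff_tubeTree :
    (tube G).edgeSet \ (tubeTree G T M).edgeSet =
      tubeXEdge '' {d | ¬ T.Adj d.fst d.snd} ∪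
        Set.range (NonTreeYIndex.edge (G := G) (M := M)) := by
  ext e
  constructor
  · rintro ⟨he, hT⟩
    rcases mem_edgeSet_tube.1 he with ⟨d, rfl⟩ | ⟨v, a, b, ha, hb, hab, rfl⟩
    · exact .inl ⟨d, fun h => hT (tubeXEdge_mem_edgeSet_tubeTree.2 h), rfl⟩
    · rw [tubeYEdge_mem_edgeSet_tubeTree, not_or, not_lt] at hT
      exact .inr ⟨⟨v, (b, a), ha, hb, hT.1.lt_of_ne hab.symm, hT.2⟩, rfl⟩
  · rintro (⟨d, hd, rfl⟩ | ⟨⟨v, ⟨b, a⟩, ha, hb, hlt, hM⟩, rfl⟩)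
    · exact ⟨mem_edgeSet_tube.2 (.inl ⟨d, rfl⟩), hd ∘ tubeXEdge_mem_edgeSet_tubeTree.1⟩
    · refine ⟨mem_edgeSet_tube.2 (.inr ⟨v, a, b, ha, hb, hlt.ne', rfl⟩), fun h => ?_⟩
      rcases tubeYEdge_mem_edgeSet_tubeTree.1 h with h | h
      exacts [h.not_gt hlt, hM h]

theorem card_nonTreeYIndex [Fintype V] [DecidableRel G.Adj]
    (hM : ∀ v, G.Adj v (M v) ∧ ∀ w, G.Adj v w → w ≤ M v) :
    Nat.card (NonTreeYIndex G M) = ∑ v, (G.degree v - 1).choose 2 := by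
  rw [Nat.card_eq_fintype_card, Fintype.card_sigma]
  refine sum_congr rfl fun v _ => ?_
  rw [Fintype.card_subtype, ← card_neighborFinset_eq_degree,
    ← card_erase_of_mem (mem_neighborFinset _ _ _ |>.2 (hM v).1), ← card_filter_lt_offDiag]
  congr 1
  ext ⟨b, a⟩
  simp only [mem_filter, mem_univ, true_and, mem_offDiag, mem_erase, mem_neighborFinset]
  constructor
  · rintro ⟨ha, hb, hlt, haM⟩
    exact ⟨⟨⟨(hlt.trans_le ((hM v).2 a ha)).ne, hb⟩, ⟨haM, ha⟩, hlt.ne⟩, hlt⟩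
  · rintro ⟨⟨⟨-, hb⟩, ⟨haM, ha⟩, -⟩, hlt⟩
    exact ⟨ha, hb, hlt, haM⟩

end SimpleGraph

theorem stmt_10_general {V : Type*} [Fintype V] [LinearOrder V] (G : SimpleGraph V)
    [DecidableRel G.Adj] (m n : ℕ) (hm : m = Fintype.card V)
    (hn : n = G.edgeFinset.card)
    (T_G : SimpleGraph V) (hle : T_G ≤ G) (htree : T_G.IsTree)
    (M : V → V) (hM : ∀ v, G.Adj v (M v) ∧ ∀ w, G.Adj v w → w ≤ M v) :
    (Nat.card ↥((tube G).edgeSet \ (tubeTree G T_G M).edgeSet) : ℤ) =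
      ((n : ℤ) - (m : ℤ) + 1) + ∑ v : V, (Nat.choose (G.degree v - 1) 2 : ℤ) := by
  rw [Nat.card_coe_set_eq, edgeSet_tube_sdiff_tubeTree,
    Set.ncard_union_eq (disjoint_image_tubeXEdge_range_nonTreeYIndex_edge _),
    ncard_image_tubeXEdge, image_dart_edge_setOf_not_adj,
    Set.ncard_range_of_injective NonTreeYIndex.edge_injective, card_nonTreeYIndex hM]
  push_cast [htree.cast_ncard_edgeSet_sdiff hle, hm, hn]
  rfl

/-- Let `G` be a finite connected simple graph with `m` vertices and `n ≥ 1` edges whose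
vertex set carries a linear order, let `T_G` be a spanning tree of `G`, and let `T` be the
spanning tree `tubeTree G T_G M` of the symmetric tube `G⁽⁰⁾`, where `M v` is the largest
neighbor of `v`.  Then the number of edges of `G⁽⁰⁾` not in `T` equals
`(n - m + 1) + ∑_v C(deg v - 1, 2)`. -/
theorem stmt_10 {V : Type*} [Fintype V] [LinearOrder V] (G : SimpleGraph V)
    [DecidableRel G.Adj] (hG : G.Connected) (m n : ℕ) (hm : m = Fintype.card V)
    (hn : n = G.edgeFinset.card) (hn1 : 1 ≤ n)
    (T_G : SimpleGraph V) (hle : T_G ≤ G) (htree : T_G.IsTree)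
    (M : V → V) (hM : ∀ v, G.Adj v (M v) ∧ ∀ w, G.Adj v w → w ≤ M v) :
    (Nat.card ↥((tube G).edgeSet \ (tubeTree G T_G M).edgeSet) : ℤ) =
      ((n : ℤ) - (m : ℤ) + 1) + ∑ v : V, (Nat.choose (G.degree v - 1) 2 : ℤ) :=
  stmt_10_general G m n hm hn T_G hle htree M hM
end
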